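/- arXiv:math/0506547 — 8 statements merged into one kernel-verified Lean document; each statement's English description precedes it below -/
import Mathlib

section
/- A family {X₁, X₂} of two subsets of a metric space X is coarse if and only if the distance function d restricted to (X \ X₁) × (X \ X₂) is coarsely proper, i.e., for all sequences x_n ∈ X \ X₁ and y_n ∈ X \ X₂ with x_n → ∞ and y_n → ∞, one has d(x_n, y_n) → ∞. -/
/-!
For the pair `{X₁, X₂}` the local Lebesgue number at `z` is the larger of the distances from `z`
to `X₁ᶜ` and to `X₂ᶜ`. If `x ∈ X₁ᶜ` and `y ∈ X₂ᶜ`, it is therefore at most `d(x, y)`, so a coarse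
pair forces `d(xₙ, yₙ) → ∞`. Conversely, if the pair is not coarse there are points `zₙ → ∞`
whose local Lebesgue number stays below some `r`; they have points `aₙ ∈ X₁ᶜ`, `bₙ ∈ X₂ᶜ`
within `r + 1`, which then also tend to infinity while `d(aₙ, bₙ) ≤ 2 (r + 1)`.
-/

open Filter Metric Bornology ENNReal

noncomputable def locLeb {X : Type*} [MetricSpace X] (𝒰 : Set (Set X)) (x : X) : ℝ≥0∞ :=
  ⨆ U ∈ 𝒰, EMetric.infEdist x Uᶜ

def CoarseFamily {X : Type*} [MetricSpace X] (𝒰 : Set (Set X)) : Prop :=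
  Filter.Tendsto (locLeb 𝒰) (Bornology.cobounded X) (nhds ⊤)

section PseudoMetric

variable {X : Type*} [PseudoMetricSpace X]

instance isCountablyGenerated_cobounded : (cobounded X).IsCountablyGenerated := by
  rcases isEmpty_or_nonempty X with _ | ⟨⟨x₀⟩⟩
  · rw [filter_eq_bot_of_isEmpty (cobounded X)]
    infer_instance
  · rw [← comap_dist_right_atTop x₀]
    infer_instance

theorem Filter.Tendsto.cobounded_of_dist_le {ι : Type*} {l : Filter ι} {a z : ι → X} {C : ℝ}
    (hz : Tendsto z l (cobounded X)) (h : ∀ᶠ i in l, dist (a i) (z i) ≤ C) :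
    Tendsto a l (cobounded X) := by
  refine fun s hs => mem_map.2 ?_
  have hfar : ∀ᶠ i in l, z i ∉ cthickening C sᶜ :=
    hz (isBounded_def.1 (isBounded_compl_iff.2 hs).cthickening)
  filter_upwards [hfar, h] with i hzi hai
  by_contra has
  exact hzi (mem_cthickening_of_dist_le (z i) (a i) C sᶜ has (by rwa [dist_comm]))

end PseudoMetric

section Pair

variable {X : Type*} [MetricSpace X] {X₁ X₂ : Set X}

theorem locLeb_pair (z : X) :
    locLeb {X₁, X₂} z = max (infEDist z X₁ᶜ) (infEDist z X₂ᶜ) := by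
  simp only [locLeb, iSup_insert, iSup_singleton]
  rfl

theorem locLeb_pair_le_edist {x y : X} (hx : x ∈ X₁ᶜ) (hy : y ∈ X₂ᶜ) :
    locLeb {X₁, X₂} x ≤ edist x y := by
  rw [locLeb_pair, infEDist_zero_of_mem hx]
  exact max_le bot_le (infEDist_le_edist_of_mem hy)

theorem exists_mem_compl_dist_lt_of_locLeb_pair_lt {z : X} {R : ℝ}
    (h : locLeb {X₁, X₂} z < ENNReal.ofReal R) :
    (∃ a ∈ X₁ᶜ, dist z a < R) ∧ ∃ b ∈ X₂ᶜ, dist z b < R := by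
  rw [locLeb_pair, max_lt_iff] at h
  obtain ⟨a, ha, hza⟩ := infEDist_lt_iff.1 h.1
  obtain ⟨b, hb, hzb⟩ := infEDist_lt_iff.1 h.2
  exact ⟨⟨a, ha, edist_lt_ofReal.1 hza⟩, ⟨b, hb, edist_lt_ofReal.1 hzb⟩⟩

theorem CoarseFamily.tendsto_dist_of_pair (h : CoarseFamily {X₁, X₂}) {ι : Type*}
    {l : Filter ι} {x y : ι → X} (hx : ∀ i, x i ∈ X₁ᶜ) (hy : ∀ i, y i ∈ X₂ᶜ)
    (hxc : Tendsto x l (cobounded X)) :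
    Tendsto (fun i => dist (x i) (y i)) l atTop := by
  rw [← tendsto_ofReal_nhds_top]
  simp only [← edist_dist]
  exact tendsto_nhds_top_mono (h.comp hxc) (.of_forall fun i => locLeb_pair_le_edist (hx i) (hy i))

theorem coarseFamily_pair_of_tendsto_dist
    (h : ∀ x y : ℕ → X, (∀ n, x n ∈ X₁ᶜ) → (∀ n, y n ∈ X₂ᶜ) →
      Tendsto x atTop (cobounded X) → Tendsto y atTop (cobounded X) →
      Tendsto (fun n => dist (x n) (y n)) atTop atTop) :
    CoarseFamily {X₁, X₂} := by
  by_contra hnot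
  rw [CoarseFamily, tendsto_nhds_top_iff_nnreal] at hnot
  simp only [not_forall, not_eventually, not_lt] at hnot
  obtain ⟨r, hr⟩ := hnot
  obtain ⟨z, hz, hzr⟩ := exists_seq_forall_of_frequently hr
  have hlt : ∀ n, locLeb {X₁, X₂} (z n) < ENNReal.ofReal (r + 1) := fun n =>
    (hzr n).trans_lt <| by
      rw [← ofReal_coe_nnreal]
      exact ofReal_lt_ofReal_iff_of_nonneg r.coe_nonneg |>.2 (lt_add_one _)
  choose a haX hza using fun n => (exists_mem_compl_dist_lt_of_locLeb_pair_lt (hlt n)).1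
  choose b hbX hzb using fun n => (exists_mem_compl_dist_lt_of_locLeb_pair_lt (hlt n)).2
  have ha : Tendsto a atTop (cobounded X) :=
    hz.cobounded_of_dist_le (.of_forall fun n => (dist_comm _ _).trans_le (hza n).le)
  have hb : Tendsto b atTop (cobounded X) :=
    hz.cobounded_of_dist_le (.of_forall fun n => (dist_comm _ _).trans_le (hzb n).le)
  obtain ⟨n, hn⟩ := ((h a b haX hbX ha hb).eventually_gt_atTop (2 * (r + 1))).exists
  linarith [dist_triangle_left (a n) (b n) (z n), hza n, hzb n]

end Pair

theorem stmt_1 {X : Type*} [MetricSpace X] (X₁ X₂ : Set X) :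
    CoarseFamily ({X₁, X₂} : Set (Set X)) ↔
      ∀ x y : ℕ → X, (∀ n, x n ∈ X₁ᶜ) → (∀ n, y n ∈ X₂ᶜ) →
        Tendsto x atTop (Bornology.cobounded X) →
        Tendsto y atTop (Bornology.cobounded X) →
        Tendsto (fun n => dist (x n) (y n)) atTop atTop :=
  ⟨fun h _ _ hx hy hxc _ => h.tendsto_dist_of_pair hx hy hxc, coarseFamily_pair_of_tendsto_dist⟩
end

section
/- A function f : X → Y between metric spaces is coarse (i.e., its Lebesgue number transfer is coarsely proper) if and only if for every R > 0 there is M > 0 such that d_X(x,y) ≤ R implies d_Y(f(x),f(y)) ≤ M for all x, y ∈ X. -/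
open Filter Metric Bornology ENNReal

/-- The Lebesgue number of a family of subsets of the whole space. -/
noncomputable def lebNum {Y : Type*} [MetricSpace Y] (𝒰 : Set (Set Y)) : ℝ≥0∞ :=
  ⨅ y : Y, ⨆ U ∈ 𝒰, EMetric.infEdist y Uᶜ

/-- The Lebesgue number transfer of a function: the infimum, over families of
Lebesgue number at least `t`, of the Lebesgue number of the preimage family. -/
noncomputable def lebTransfer {X Y : Type*} [MetricSpace X] [MetricSpace Y]
    (f : X → Y) (t : ℝ≥0∞) : ℝ≥0∞ :=
  ⨅ 𝒰 ∈ {𝒰 : Set (Set Y) | t ≤ lebNum 𝒰}, lebNum ((Set.preimage f) '' 𝒰)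

/-!
If `f` is coarse, test it on the cover of `Y` by all balls of radius `s`: its Lebesgue number is
at least `s`, while no preimage of such a ball contains two points whose images are `2 s` apart,
so the Lebesgue number of the preimage cover is at most the distance of any two such points.
Conversely, if `d(x, y) ≤ R` forces `d(f x, f y) ≤ M`, then any cover of `Y` with Lebesgue number
`t > M` contains, around each `f x`, a set whose complement is farther than `M` from `f x`; its
preimage then contains the closed `R`-neighbourhood of `x`, so `L^f(t) ≥ R`.
-/

section LebesgueNumber

variable {X Y : Type*} [MetricSpace X] [MetricSpace Y]

theorem lebNum_le_edist_of_separates {𝒰 : Set (Set X)} {x y : X}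
    (h : ∀ U ∈ 𝒰, x ∈ U → y ∉ U) : lebNum 𝒰 ≤ edist x y := by
  refine iInf_le_of_le x (iSup₂_le fun U hU => ?_)
  by_cases hx : x ∈ U
  · exact infEDist_le_edist_of_mem (h U hU hx)
  · exact (infEDist_zero_of_mem (Set.mem_compl hx)).trans_le bot_le

theorem le_lebNum_range_ball (r : ℝ≥0∞) : r ≤ lebNum (Set.range fun z : Y => eball z r) :=
  le_iInf fun y => le_iSup₂_of_le (eball y r) ⟨y, rfl⟩ <|
    le_infEDist.2 fun _ hz => not_lt.1 fun h => hz (mem_eball'.2 h)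

theorem lebTransfer_le_lebNum_preimage (f : X → Y) {t : ℝ≥0∞} {𝒰 : Set (Set Y)}
    (h : t ≤ lebNum 𝒰) : lebTransfer f t ≤ lebNum (Set.preimage f '' 𝒰) :=
  iInf₂_le 𝒰 h

theorem lebTransfer_le_edist (f : X → Y) {r : ℝ≥0∞} {x y : X}
    (h : 2 * r ≤ edist (f x) (f y)) : lebTransfer f r ≤ edist x y := by
  refine (lebTransfer_le_lebNum_preimage f (le_lebNum_range_ball r)).trans
    (lebNum_le_edist_of_separates ?_)
  rintro _ ⟨_, ⟨z, rfl⟩, rfl⟩ hx hy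
  have : edist (f x) (f y) < 2 * r :=
    calc edist (f x) (f y) ≤ edist (f x) z + edist (f y) z := edist_triangle_right _ _ _
      _ < r + r := ENNReal.add_lt_add hx hy
      _ = 2 * r := (two_mul r).symm
  exact this.not_ge h

theorem le_lebTransfer {f : X → Y} {r m t : ℝ≥0∞}
    (hf : ∀ x y, edist x y ≤ r → edist (f x) (f y) ≤ m) (hm : m < t) : r ≤ lebTransfer f t := by
  refine le_iInf₂ fun 𝒰 h𝒰 => le_iInf fun x => ?_
  obtain ⟨U, hU, hmU⟩ : ∃ U ∈ 𝒰, m < infEDist (f x) Uᶜ := by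
    have hmx := hm.trans_le (h𝒰.trans (iInf_le _ (f x)))
    simp only [lt_iSup_iff, exists_prop] at hmx
    exact hmx
  refine le_iSup₂_of_le (f ⁻¹' U) ⟨U, hU, rfl⟩ (le_infEDist.2 fun x' hx' => ?_)
  have hfar : m < edist (f x) (f x') := hmU.trans_le (infEDist_le_edist_of_mem hx')
  exact le_of_not_ge fun hle => hfar.not_ge (hf x x' hle)

end LebesgueNumber

theorem stmt_3 {X Y : Type*} [MetricSpace X] [MetricSpace Y] (f : X → Y) :
    Filter.Tendsto (fun t : ℝ => lebTransfer f (ENNReal.ofReal t)) atTop (nhds ⊤) ↔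
      ∀ R > (0 : ℝ), ∃ M > (0 : ℝ), ∀ x y : X, dist x y ≤ R → dist (f x) (f y) ≤ M := by
  constructor
  · intro h R hR
    obtain ⟨s, hR_lt, hs⟩ := ((h.eventually (lt_mem_nhds ofReal_lt_top)).and
      (eventually_ge_atTop 1)).exists
    refine ⟨2 * s, by linarith, fun x y hxy => not_lt.1 fun hfar => hR_lt.not_ge ?_⟩
    have h2s : 2 * ENNReal.ofReal s ≤ edist (f x) (f y) := by
      rw [edist_dist, ← ofReal_ofNat, ← ofReal_mul zero_le_two]
      exact ofReal_le_ofReal hfar.le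
    exact (lebTransfer_le_edist f h2s).trans ((edist_le_ofReal hR.le).2 hxy)
  · intro h
    refine ENNReal.tendsto_nhds_top fun n => ?_
    obtain ⟨M, hM, hbound⟩ := h (n + 1) (by positivity)
    filter_upwards [eventually_gt_atTop M] with t hMt
    have hf : ∀ x y, edist x y ≤ ENNReal.ofReal (n + 1) → edist (f x) (f y) ≤ ENNReal.ofReal M :=
      fun x y hxy =>
        (edist_le_ofReal hM.le).2 (hbound x y ((edist_le_ofReal (by positivity)).1 hxy))
    calc (n : ℝ≥0∞) < ENNReal.ofReal (n + 1) := by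
          rw [← Nat.cast_succ, ofReal_natCast]; exact_mod_cast n.lt_succ_self
      _ ≤ lebTransfer f (ENNReal.ofReal t) :=
          le_lebTransfer hf ((ofReal_lt_ofReal_iff (hM.trans hMt)).2 hMt)
end

section
/- A function f : X → Y is asymptotically Lipschitz (i.e., there exist constants M > 0 and A with d_Y(f(x),f(y)) ≤ M·d_X(x,y) + A for all x,y) if and only if there exist m > 0 and b with L^f(t) ≥ m·t + b for all t, where L^f is the Lebesgue number transfer of f. -/
open Filter Metric Bornology ENNReal

open scoped NNReal

/-!
An asymptotically Lipschitz bound `d(f x, f y) ≤ M d(x, y) + A` pulls distances to complements back: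
`d(f x, Uᶜ) ≤ M d(x, (f⁻¹ U)ᶜ) + A`, hence `L^f(t) ≥ (t - A) / M`. Conversely, the balls of radius `t`
cover `Y` with Lebesgue number `≥ t`; if `d(x, x') < L^f(t)`, then `x` and `x'` lie in a common
pulled-back ball, so `d(f x, f x') < 2t`, and `t` can be chosen affine in `d(x, x')`.
-/

section

variable {X Y : Type*} [MetricSpace X] [MetricSpace Y] {f : X → Y}

theorem infEDist_compl_le_mul_infEDist_preimage_compl_add {M : ℝ≥0} {A : ℝ≥0∞} (hM : M ≠ 0)
    (hf : ∀ x y, edist (f x) (f y) ≤ M * edist x y + A) (U : Set Y) (x : X) :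
    infEDist (f x) Uᶜ ≤ M * infEDist x (f ⁻¹' U)ᶜ + A := by
  rw [infEDist, infEDist, ENNReal.mul_iInf_of_ne (by simpa) coe_ne_top, ENNReal.iInf_add]
  refine le_iInf fun z => ?_
  rw [ENNReal.mul_iInf_of_ne (by simpa) coe_ne_top, ENNReal.iInf_add]
  exact le_iInf fun hz => (biInf_le (edist (f x)) hz).trans (hf x z)

theorem lebNum_le_mul_lebNum_preimage_add {M : ℝ≥0} {A : ℝ≥0∞} (hM : M ≠ 0)
    (hf : ∀ x y, edist (f x) (f y) ≤ M * edist x y + A) (𝒰 : Set (Set Y)) :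
    lebNum 𝒰 ≤ M * lebNum (Set.preimage f '' 𝒰) + A := by
  rw [lebNum, lebNum, ENNReal.mul_iInf_of_ne (by simpa) coe_ne_top, ENNReal.iInf_add]
  refine le_iInf fun x => (iInf_le _ (f x)).trans <| iSup₂_le fun U hU => ?_
  refine (infEDist_compl_le_mul_infEDist_preimage_compl_add hM hf U x).trans ?_
  gcongr
  exact le_iSup₂ (f := fun V _ => infEDist x Vᶜ) (f ⁻¹' U) ⟨U, hU, rfl⟩

theorem sub_div_le_lebTransfer {M : ℝ≥0} {A : ℝ≥0∞} (hM : M ≠ 0)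
    (hf : ∀ x y, edist (f x) (f y) ≤ M * edist x y + A) (t : ℝ≥0∞) :
    (t - A) / M ≤ lebTransfer f t :=
  le_iInf₂ fun 𝒰 (h𝒰 : t ≤ lebNum 𝒰) => ENNReal.div_le_of_le_mul <| tsub_le_iff_right.2 <|
    h𝒰.trans <| mul_comm (M : ℝ≥0∞) _ ▸ lebNum_le_mul_lebNum_preimage_add hM hf 𝒰

theorem ofReal_le_lebNum_range_ball (t : ℝ) :
    ENNReal.ofReal t ≤ lebNum (Set.range fun y : Y => ball y t) :=
  le_iInf fun y => le_iSup₂_of_le (ball y t) ⟨y, rfl⟩ <| le_infEDist.2 fun z hz => by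
    rw [edist_dist, dist_comm]
    exact ENNReal.ofReal_le_ofReal (not_lt.1 hz)

theorem exists_mem_of_edist_lt_lebNum {𝒰 : Set (Set Y)} {y y' : Y} (h : edist y y' < lebNum 𝒰) :
    ∃ U ∈ 𝒰, y ∈ U ∧ y' ∈ U := by
  obtain ⟨U, hU, hlt⟩ := lt_biSup_iff.1 (h.trans_le (iInf_le _ y))
  refine ⟨U, hU, ?_, ?_⟩ <;> by_contra hnot
  · exact hlt.not_ge ((infEDist_zero_of_mem hnot).trans_le zero_le)
  · exact hlt.not_ge (infEDist_le_edist_of_mem hnot)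

theorem dist_lt_of_edist_lt_lebTransfer {x x' : X} {t : ℝ}
    (h : edist x x' < lebTransfer f (ENNReal.ofReal t)) : dist (f x) (f x') < 2 * t := by
  have hballs := biInf_le (fun 𝒰 => lebNum (Set.preimage f '' 𝒰))
    (show _ ∈ {𝒰 | _ ≤ lebNum 𝒰} from ofReal_le_lebNum_range_ball (Y := Y) t)
  obtain ⟨_, ⟨_, ⟨y, rfl⟩, rfl⟩, hx, hx'⟩ := exists_mem_of_edist_lt_lebNum (h.trans_le hballs)
  calc dist (f x) (f x') ≤ dist (f x) y + dist (f x') y := dist_triangle_right _ _ _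
    _ < t + t := add_lt_add hx hx'
    _ = 2 * t := (two_mul t).symm

end

theorem stmt_4 {X Y : Type*} [MetricSpace X] [MetricSpace Y] (f : X → Y) :
    (∃ M > (0 : ℝ), ∃ A : ℝ, ∀ x y : X, dist (f x) (f y) ≤ M * dist x y + A) ↔
      (∃ m > (0 : ℝ), ∃ b : ℝ, ∀ t : ℝ, 0 ≤ t →
        ENNReal.ofReal (m * t + b) ≤ lebTransfer f (ENNReal.ofReal t)) := by
  constructor
  · rintro ⟨M, hM, A, hf⟩
    have hf' : ∀ x y, edist (f x) (f y) ≤ M.toNNReal * edist x y + ENNReal.ofReal A := by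
      intro x y
      rw [edist_dist, edist_dist, ← ENNReal.ofReal, ← ENNReal.ofReal_mul hM.le]
      exact (ENNReal.ofReal_le_ofReal (hf x y)).trans ENNReal.ofReal_add_le
    refine ⟨1 / M, by positivity, -(|A| / M), fun t _ => ?_⟩
    refine le_trans ?_ (sub_div_le_lebTransfer (by simpa) hf' _)
    rw [show 1 / M * t + -(|A| / M) = (t - |A|) / M by ring, ENNReal.ofReal_div_of_pos hM,
      ENNReal.ofReal_sub _ (abs_nonneg A)]
    exact ENNReal.div_le_div_right (tsub_le_tsub_left (ofReal_le_ofReal (le_abs_self A)) _) _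
  · rintro ⟨m, hm, b, hb⟩
    refine ⟨2 / m, by positivity, 2 * (1 + |b|) / m, fun x x' => ?_⟩
    set t := (dist x x' + 1 + |b|) / m
    have ht : dist x x' < m * t + b := by
      rw [mul_div_cancel₀ _ hm.ne']; linarith [neg_abs_le b]
    have hfx := dist_lt_of_edist_lt_lebTransfer (f := f) <| (edist_dist x x').trans_lt <|
      (ENNReal.ofReal_lt_ofReal_iff_of_nonneg dist_nonneg).2 ht |>.trans_le (hb t (by positivity))
    calc dist (f x) (f x') ≤ 2 * t := hfx.le
      _ = 2 / m * dist x x' + 2 * (1 + |b|) / m := by ring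
end

section
/- For a function f : X → Y between metric spaces, the following are equivalent: (1) f sends bounded sets to bounded sets and f⁻¹(𝒰) is a coarse family in X for every coarse family 𝒰 in Y; (2) f is coarse and coarsely proper. -/
open Filter Metric Bornology ENNReal

/-!
If `d(x, z) ≤ R` forces `d(f x, f z) ≤ K`, then a member `U` of `𝒰` with `d(f x, Uᶜ) > K` gives
`d(x, (f⁻¹ U)ᶜ) ≥ R`; so a coarse map pulls coarse families back to coarse families as soon as it
is coarsely proper. Conversely, the Lebesgue function of `{Bᶜ}` is `d(·, B)`, so `{Bᶜ}` is coarse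
exactly when `B` is bounded, and pulling it back shows that `f` is coarsely proper.

If `f` were not coarse, there would be pairs `pₙ, qₙ` with `d(pₙ, qₙ) ≤ R` and
`d(f pₙ, f qₙ) → ∞`. With `r(y) = infₙ max (d(y, f pₙ), d(y, f qₙ))`, the balls `B(y, r(y)/2)`
form a coarse family of `Y` none of whose members contains a pair `f pₙ, f qₙ`. Its pullback then
has Lebesgue number at most `R` at every `pₙ`, although the `pₙ` form an unbounded set because `f`
maps bounded sets to bounded sets.
-/

open Set Topology
open scoped NNReal

section Bornology

variable {X : Type*} [Bornology X]

theorem eventually_cobounded_iff {P : X → Prop} :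
    (∀ᶠ x in cobounded X, P x) ↔ IsBounded {x | ¬ P x} := by
  rw [isBounded_def, compl_ofPred]
  simp only [not_not, Filter.Eventually]

theorem tendsto_cobounded_nhds_top_iff_le {g : X → ℝ≥0∞} :
    Tendsto g (cobounded X) (𝓝 ⊤) ↔ ∀ c : ℝ≥0, IsBounded {x | g x ≤ c} := by
  simp only [ENNReal.tendsto_nhds_top_iff_nnreal, eventually_cobounded_iff, not_lt]

theorem tendsto_cobounded_nhds_top_iff_lt {g : X → ℝ≥0∞} :
    Tendsto g (cobounded X) (𝓝 ⊤) ↔ ∀ c : ℝ≥0, IsBounded {x | g x < c} := by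
  rw [tendsto_cobounded_nhds_top_iff_le]
  refine ⟨fun h c => (h c).subset fun x (hx : g x < c) => hx.le,
    fun h c => (h (c + 1)).subset fun x (hx : g x ≤ c) =>
      hx.trans_lt (ENNReal.coe_lt_coe.2 (lt_add_one c))⟩

end Bornology

section LocLeb

variable {X : Type*} [MetricSpace X]

theorem infEDist_compl_le_locLeb {𝒰 : Set (Set X)} {U : Set X} (hU : U ∈ 𝒰) (x : X) :
    Metric.infEDist x Uᶜ ≤ locLeb 𝒰 x :=
  le_biSup (fun U => Metric.infEDist x Uᶜ) hU

theorem locLeb_le_edist {𝒰 : Set (Set X)} {x z : X} (h : ∀ U ∈ 𝒰, x ∈ U → z ∉ U) :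
    locLeb 𝒰 x ≤ edist x z := by
  refine iSup₂_le fun U hU => ?_
  by_cases hx : x ∈ U
  · exact Metric.infEDist_le_edist_of_mem (h U hU hx)
  · exact (Metric.infEDist_zero_of_mem (show x ∈ Uᶜ from hx)).trans_le zero_le

theorem locLeb_singleton_compl (A : Set X) (x : X) :
    locLeb {Aᶜ} x = Metric.infEDist x A := by
  rw [locLeb, iSup_singleton, compl_compl]
  rfl

theorem coarseFamily_singleton_compl_iff {A : Set X} : CoarseFamily {Aᶜ} ↔ IsBounded A := by
  simp only [CoarseFamily, tendsto_cobounded_nhds_top_iff_le, locLeb_singleton_compl]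
  refine ⟨fun h => (h 0).subset fun x hx => by simp [Metric.infEDist_zero_of_mem hx],
    fun hA c => ?_⟩
  simpa [Metric.cthickening] using hA.cthickening (δ := c)

end LocLeb

section PairSeparatingFamily

variable {Y : Type*} [MetricSpace Y] (a b : ℕ → Y)

noncomputable def pairRadius (y : Y) : ℝ≥0∞ :=
  ⨅ n, max (edist y (a n)) (edist y (b n))

noncomputable def pairSeparatingFamily : Set (Set Y) :=
  range fun y => Metric.eball y (pairRadius a b y / 2)

variable {a b}

theorem not_mem_of_mem_pairSeparatingFamily {U : Set Y} (hU : U ∈ pairSeparatingFamily a b)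
    {n : ℕ} (ha : a n ∈ U) : b n ∉ U := by
  obtain ⟨y, rfl⟩ := hU
  intro hb
  rw [Metric.mem_eball, edist_comm] at ha hb
  have : pairRadius a b y < pairRadius a b y / 2 := (iInf_le _ n).trans_lt (max_lt ha hb)
  exact this.not_ge ENNReal.half_le_self

theorem pairRadius_div_two_le_locLeb (y : Y) :
    pairRadius a b y / 2 ≤ locLeb (pairSeparatingFamily a b) y := by
  refine le_trans ?_ (infEDist_compl_le_locLeb (𝒰 := pairSeparatingFamily a b) ⟨y, rfl⟩ y)
  exact Metric.le_infEDist.2 fun z hz => by simpa [Metric.mem_eball, edist_comm] using hz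

theorem isBounded_setOf_pairRadius_lt (h : Tendsto (fun n => edist (a n) (b n)) atTop (𝓝 ⊤))
    (c : ℝ≥0) : IsBounded {y | pairRadius a b y < c} := by
  obtain ⟨N, hN⟩ := eventually_atTop.1 (ENNReal.tendsto_nhds_top_iff_nnreal.1 h (2 * c))
  refine ((isBounded_biUnion_finset (Finset.range N) (f := fun n => ball (a n) c)).2
    fun n _ => isBounded_ball).subset fun y (hy : pairRadius a b y < c) => ?_
  obtain ⟨n, hn⟩ := iInf_lt_iff.1 hy
  have hna : edist y (a n) < c := (le_max_left _ _).trans_lt hn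
  have hnb : edist y (b n) < c := (le_max_right _ _).trans_lt hn
  have hnN : n < N := by
    by_contra! hNn
    refine (hN n hNn).not_ge ?_
    calc edist (a n) (b n) ≤ edist y (a n) + edist y (b n) := edist_triangle_left _ _ _
      _ ≤ c + c := add_le_add hna.le hnb.le
      _ = ↑(2 * c) := by push_cast; ring
  simp only [mem_iUnion₂, Finset.mem_range]
  exact ⟨n, hnN, by simpa [edist_lt_coe] using hna⟩

theorem coarseFamily_pairSeparatingFamily
    (h : Tendsto (fun n => edist (a n) (b n)) atTop (𝓝 ⊤)) :
    CoarseFamily (pairSeparatingFamily a b) := by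
  refine tendsto_cobounded_nhds_top_iff_lt.2 fun c =>
    (isBounded_setOf_pairRadius_lt h (2 * c)).subset fun y hy => ?_
  have := (pairRadius_div_two_le_locLeb y).trans_lt hy
  rw [ENNReal.div_lt_iff (by simp) (by simp)] at this
  simpa [mul_comm] using this

end PairSeparatingFamily

section Maps

variable {X Y : Type*} [MetricSpace X] [MetricSpace Y] {f : X → Y}

theorem isBounded_image_of_coarse
    (hf : ∀ R > (0 : ℝ), ∃ M > (0 : ℝ), ∀ x y : X,
      dist x y ≤ R → dist (f x) (f y) ≤ M)
    {B : Set X} (hB : IsBounded B) : IsBounded (f '' B) := by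
  obtain ⟨C, hC⟩ := isBounded_iff.1 hB
  obtain ⟨M, -, hM⟩ := hf (max C 1) (by positivity)
  refine isBounded_iff.2 ⟨M, ?_⟩
  rintro _ ⟨x, hx, rfl⟩ _ ⟨y, hy, rfl⟩
  exact hM x y ((hC hx hy).trans (le_max_left _ _))

theorem ofReal_le_locLeb_preimage {𝒰 : Set (Set Y)} {x : X} {R K : ℝ}
    (hK : ∀ z, dist x z ≤ R → dist (f x) (f z) ≤ K)
    (hx : ENNReal.ofReal K < locLeb 𝒰 (f x)) :
    ENNReal.ofReal R ≤ locLeb (preimage f '' 𝒰) x := by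
  obtain ⟨U, hU, hKU⟩ := lt_biSup_iff.1 hx
  refine le_trans ?_ (infEDist_compl_le_locLeb (mem_image_of_mem (preimage f) hU) x)
  refine Metric.le_infEDist.2 fun z (hz : f z ∉ U) => not_lt.1 fun hxz => hKU.not_ge ?_
  calc Metric.infEDist (f x) Uᶜ ≤ edist (f x) (f z) := Metric.infEDist_le_edist_of_mem hz
    _ ≤ ENNReal.ofReal K := by
      rw [edist_dist]; exact ENNReal.ofReal_le_ofReal (hK z (edist_lt_ofReal.1 hxz).le)

theorem coarseFamily_preimage_image
    (hf : ∀ R > (0 : ℝ), ∃ M > (0 : ℝ), ∀ x y : X,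
      dist x y ≤ R → dist (f x) (f y) ≤ M)
    (hp : ∀ B : Set Y, IsBounded B → IsBounded (f ⁻¹' B))
    {𝒰 : Set (Set Y)} (h𝒰 : CoarseFamily 𝒰) : CoarseFamily (preimage f '' 𝒰) := by
  refine tendsto_cobounded_nhds_top_iff_lt.2 fun c => ?_
  obtain ⟨K, -, hK⟩ := hf (c + 1) (by positivity)
  refine (hp _ (tendsto_cobounded_nhds_top_iff_le.1 h𝒰 K.toNNReal)).subset
    fun x (hx : locLeb _ x < c) =>
      show locLeb 𝒰 (f x) ≤ _ from not_lt.1 fun hKx => hx.not_ge ?_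
  calc (c : ℝ≥0∞) ≤ ENNReal.ofReal (c + 1) := by
        rw [← ENNReal.ofReal_coe_nnreal]; exact ENNReal.ofReal_le_ofReal (by linarith)
    _ ≤ locLeb (preimage f '' 𝒰) x := ofReal_le_locLeb_preimage (hK x) hKx

theorem not_isBounded_range_of_lt_dist {p q : ℕ → X} {R : ℝ}
    (hf : ∀ B : Set X, IsBounded B → IsBounded (f '' B))
    (hpq : ∀ n, dist (p n) (q n) ≤ R)
    (hfar : ∀ n : ℕ, (n : ℝ) < dist (f (p n)) (f (q n))) :
    ¬ IsBounded (range p) := by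
  intro hp
  have hq : range q ⊆ cthickening R (range p) := range_subset_iff.2 fun n =>
    mem_cthickening_of_dist_le _ _ _ _ (mem_range_self n) (by rw [dist_comm]; exact hpq n)
  obtain ⟨C, hC⟩ := isBounded_iff.1 (hf _ (hp.union (hp.cthickening.subset hq)))
  have := hC (mem_image_of_mem f (Or.inl (mem_range_self ⌈C⌉₊)))
    (mem_image_of_mem f (Or.inr (mem_range_self ⌈C⌉₊)))
  linarith [hfar ⌈C⌉₊, Nat.le_ceil C]

theorem coarse_of_forall_coarseFamily_preimage_image
    (hf : ∀ B : Set X, IsBounded B → IsBounded (f '' B))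
    (hfam : ∀ 𝒰 : Set (Set Y), CoarseFamily 𝒰 → CoarseFamily (preimage f '' 𝒰)) :
    ∀ R > (0 : ℝ), ∃ M > (0 : ℝ), ∀ x y : X,
      dist x y ≤ R → dist (f x) (f y) ≤ M := by
  intro R hR
  by_contra! hM
  choose p q hpq hfar using fun n : ℕ => hM (n + 1) (by positivity)
  have hunb := not_isBounded_range_of_lt_dist hf hpq fun n => (lt_add_one _).trans (hfar n)
  have hsep : Tendsto (fun n => edist (f (p n)) (f (q n))) atTop (𝓝 ⊤) :=
    tendsto_nhds_top_mono' ENNReal.tendsto_nat_nhds_top fun n => by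
      rw [edist_dist, ← ENNReal.ofReal_natCast]
      exact ENNReal.ofReal_le_ofReal (by linarith [hfar n])
  refine hunb ((tendsto_cobounded_nhds_top_iff_le.1
    (hfam _ (coarseFamily_pairSeparatingFamily hsep)) R.toNNReal).subset ?_)
  rintro _ ⟨n, rfl⟩
  refine (locLeb_le_edist (z := q n) ?_).trans (edist_le_ofReal hR.le |>.2 (hpq n))
  rintro _ ⟨U, hU, rfl⟩
  exact not_mem_of_mem_pairSeparatingFamily hU

theorem isBounded_preimage_of_forall_coarseFamily_preimage_image
    (hfam : ∀ 𝒰 : Set (Set Y), CoarseFamily 𝒰 → CoarseFamily (preimage f '' 𝒰))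
    {B : Set Y} (hB : IsBounded B) : IsBounded (f ⁻¹' B) := by
  have := hfam _ (coarseFamily_singleton_compl_iff.2 hB)
  rw [image_singleton, preimage_compl] at this
  exact coarseFamily_singleton_compl_iff.1 this

end Maps

theorem stmt_5 {X Y : Type*} [MetricSpace X] [MetricSpace Y] (f : X → Y) :
    ((∀ B : Set X, Bornology.IsBounded B → Bornology.IsBounded (f '' B)) ∧
      (∀ 𝒰 : Set (Set Y), CoarseFamily 𝒰 → CoarseFamily ((Set.preimage f) '' 𝒰))) ↔
    ((∀ R > (0 : ℝ), ∃ M > (0 : ℝ), ∀ x y : X, dist x y ≤ R → dist (f x) (f y) ≤ M) ∧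
      (∀ B : Set Y, Bornology.IsBounded B → Bornology.IsBounded (f ⁻¹' B))) :=
  ⟨fun ⟨hf, hfam⟩ => ⟨coarse_of_forall_coarseFamily_preimage_image hf hfam,
      fun _ => isBounded_preimage_of_forall_coarseFamily_preimage_image hfam⟩,
    fun ⟨hf, hp⟩ => ⟨fun _ => isBounded_image_of_coarse hf,
      fun _ => coarseFamily_preimage_image hf hp⟩⟩
end

section
/- If 𝒰 = {U_s} is a family of subsets of a metric space X of multiplicity at most n+1, then it can be refined by a family 𝒱 = ⋃_{i=1}^{n+1} 𝒱^i such that L_𝒱(x) ≥ L_𝒰(x)/(2n+2) for each x ∈ X, and each 𝒱^i consists of pairwise disjoint sets. -/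
open Filter Metric Bornology ENNReal

/-!
Put `d_s(x) = infEDist x (U s)ᶜ` and let `W_T` be the set where every `d_t`, `t ∈ T`, is positive
and strictly exceeds every `d_s`, `s ∉ T`. Sets `W_T` with `|T|` fixed are pairwise disjoint, and
`W_T ⊆ U_t` for `t ∈ T`. At a point `x` at most `n + 1` of the values `d_s(x)` are positive and
their supremum is `L_𝒰(x)`. Given `r < L_𝒰(x) / (2n + 2)`, walk down from a value above
`(n + 1) · 2r`: each step to a value within `2r` below loses less than `2r`, so after at most `n`
steps one reaches a value `c ≥ 2r` with no `d_s(x)` in `[c - 2r, c)`. The indices `T` with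
`d_t(x) ≥ c` are then separated from all others by `2r`, and since every `d_s` is 1-Lipschitz,
`T` stays dominant on the ball of radius `r` about `x`, i.e. this ball lies in `W_T`.
-/

theorem Finset.exists_gap_below {ι α : Type*} [AddCommMonoid α] [LinearOrder α]
    [IsOrderedAddMonoid α] {δ : α} (hδ : 0 ≤ δ) (v : ι → α) {k : ℕ} {A : Finset ι}
    (hA : A.card ≤ k) {a : ι} (ha : a ∈ A) (hka : k • δ ≤ v a) :
    ∃ c ∈ A, δ ≤ v c ∧ ∀ s ∈ A, v s < v c → v s + δ ≤ v c := by
  induction k generalizing A a with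
  | zero => simp_all
  | succ k ih =>
    by_cases hgap : ∀ s ∈ A, v s < v a → v s + δ ≤ v a
    · refine ⟨a, ha, le_trans ?_ hka, hgap⟩
      rw [succ_nsmul]
      exact le_add_of_nonneg_left (nsmul_nonneg hδ k)
    push Not at hgap
    obtain ⟨b, hb, hba, hab⟩ := hgap
    have hcard : (A.filter (v · < v a)).card ≤ k := by
      have := Finset.card_lt_card
        (Finset.filter_ssubset (p := (v · < v a)) |>.2 ⟨a, ha, lt_irrefl (v a)⟩)
      omega
    have hkb : k • δ ≤ v b := by
      refine (lt_of_add_lt_add_right (a := δ) ?_).le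
      rw [← succ_nsmul]
      exact hka.trans_lt hab
    obtain ⟨c, hc, hδc, hcgap⟩ := ih hcard (Finset.mem_filter.2 ⟨hb, hba⟩) hkb
    have hca := (Finset.mem_filter.1 hc).2
    exact ⟨c, Finset.filter_subset _ _ hc, hδc, fun s hs hsc =>
      hcgap s (Finset.mem_filter.2 ⟨hs, hsc.trans hca⟩) hsc⟩

theorem ENNReal.lt_of_add_two_mul_le {a b a' b' e r : ℝ≥0∞} (ha : a ≠ ∞) (hab : a + 2 * r ≤ b)
    (hb : b ≤ b' + e) (ha' : a' ≤ a + e) (he : e < r) : a' < b' := by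
  by_contra! hba
  have : a + 2 * r ≤ a + 2 * e :=
    calc a + 2 * r ≤ b := hab
      _ ≤ a' + e := hb.trans (by gcongr)
      _ ≤ a + e + e := by gcongr
      _ = a + 2 * e := by rw [two_mul, add_assoc]
  have h2 : 2 * e < 2 * r := by gcongr; simp
  exact (ENNReal.le_of_add_le_add_left ha this).not_gt h2

theorem Metric.mem_of_infEDist_compl_pos {X : Type*} [PseudoEMetricSpace X] {x : X}
    {s : Set X} (h : 0 < infEDist x sᶜ) : x ∈ s :=
  not_not.1 fun hx => h.ne' (infEDist_zero_of_mem hx)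

theorem Metric.le_infEDist_compl_of_eball_subset {X : Type*} [PseudoEMetricSpace X] {x : X}
    {r : ℝ≥0∞} {s : Set X} (h : eball x r ⊆ s) : r ≤ infEDist x sᶜ :=
  le_infEDist.2 fun _ hy => not_lt.1 fun hlt => hy (h (mem_eball'.2 hlt))

section DominantSet

variable {X S : Type*} (f : S → X → ℝ≥0∞)

def dominantSet (T : Finset S) : Set X :=
  {x | ∀ t ∈ T, 0 < f t x ∧ ∀ s ∉ T, f s x < f t x}

variable {f}

theorem disjoint_dominantSet {T₁ T₂ : Finset S} (hcard : T₁.card = T₂.card) (hne : T₁ ≠ T₂) :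
    Disjoint (dominantSet f T₁) (dominantSet f T₂) := by
  obtain ⟨t₁, ht₁, ht₁'⟩ : ∃ t ∈ T₁, t ∉ T₂ := Finset.not_subset.1 fun h =>
    hne (Finset.eq_of_subset_of_card_le h hcard.ge)
  obtain ⟨t₂, ht₂, ht₂'⟩ : ∃ t ∈ T₂, t ∉ T₁ := Finset.not_subset.1 fun h =>
    hne (Finset.eq_of_subset_of_card_le h hcard.le).symm
  exact Set.disjoint_left.2 fun x hx₁ hx₂ =>
    lt_asymm ((hx₁ t₁ ht₁).2 t₂ ht₂') ((hx₂ t₂ ht₂).2 t₁ ht₁')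

theorem exists_eball_subset_dominantSet [PseudoEMetricSpace X]
    (hf : ∀ s y z, f s y ≤ f s z + edist y z) {x : X} {A : Finset S} {k : ℕ}
    (hA : A.card ≤ k) (hzero : ∀ s ∉ A, f s x = 0) {r : ℝ≥0∞} {a : S}
    (ha : k * (2 * r) < f a x) :
    ∃ T ⊆ A, T.Nonempty ∧ Metric.eball x r ⊆ dominantSet f T := by
  classical
  have haA : a ∈ A := by
    by_contra h
    simp [hzero a h] at ha
  obtain ⟨c, hcA, hrc, hgap⟩ := Finset.exists_gap_below (zero_le : 0 ≤ 2 * r) (f · x) hA haA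
    (by rw [nsmul_eq_mul]; exact ha.le)
  have hsep : ∀ s ∉ A.filter (f c x ≤ f · x), f s x ≠ ∞ ∧ f s x + 2 * r ≤ f c x := by
    intro s hs
    by_cases hsA : s ∈ A
    · have hsc : f s x < f c x := not_le.1 fun h => hs (Finset.mem_filter.2 ⟨hsA, h⟩)
      exact ⟨hsc.ne_top, hgap s hsA hsc⟩
    · simp [hzero s hsA, hrc]
  refine ⟨A.filter (f c x ≤ f · x), Finset.filter_subset _ _,
    ⟨c, Finset.mem_filter.2 ⟨hcA, le_rfl⟩⟩, fun y hy t ht => ?_⟩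
  have hct := (Finset.mem_filter.1 ht).2
  rw [Metric.mem_eball'] at hy
  refine ⟨ENNReal.lt_of_add_two_mul_le ENNReal.zero_ne_top ?_ (hf t x y) zero_le hy,
    fun s hs => ENNReal.lt_of_add_two_mul_le (hsep s hs).1 ?_ (hf t x y) ?_ hy⟩
  · simpa using hrc.trans hct
  · exact (hsep s hs).2.trans hct
  · exact (hf s y x).trans_eq (by rw [edist_comm])

end DominantSet

theorem exists_eball_subset_dominantSet_infEDist {X S : Type*} [PseudoEMetricSpace X]
    {U : S → Set X} {n : ℕ} {x : X} (hx : {s | x ∈ U s}.encard ≤ (n + 1 : ℕ)) {r : ℝ≥0∞}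
    (hr : ((n + 1 : ℕ) : ℝ≥0∞) * (2 * r) < ⨆ s, infEDist x (U s)ᶜ) :
    ∃ T : Finset S, 0 < T.card ∧ T.card ≤ n + 1 ∧
      eball x r ⊆ dominantSet (fun s y => infEDist y (U s)ᶜ) T := by
  have hfin := Set.finite_of_encard_le_coe hx
  have hcard : hfin.toFinset.card ≤ n + 1 := by
    rwa [hfin.encard_eq_coe_toFinset_card, Nat.cast_le] at hx
  have hzero : ∀ s ∉ hfin.toFinset, infEDist x (U s)ᶜ = 0 := fun s hs =>
    infEDist_zero_of_mem (by simpa using hs)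
  obtain ⟨a, ha⟩ := lt_iSup_iff.1 hr
  obtain ⟨T, hTA, hT, hball⟩ :=
    exists_eball_subset_dominantSet (f := fun s y => infEDist y (U s)ᶜ)
      (fun _ _ _ => infEDist_le_infEDist_add_edist) hcard hzero ha
  exact ⟨T, hT.card_pos, (Finset.card_le_card hTA).trans hcard, hball⟩

theorem stmt_10 {X : Type*} [MetricSpace X] {S : Type*} (n : ℕ) (U : S → Set X)
    (hmult : ∀ x : X, {s : S | x ∈ U s}.encard ≤ (n + 1 : ℕ)) :
    ∃ V : Fin (n + 1) → Set (Set X),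
      (∀ i, ∀ W ∈ V i, ∃ s : S, W ⊆ U s) ∧
      (∀ i, (V i).Pairwise (fun A B => Disjoint A B)) ∧
      (∀ x : X, locLeb (Set.range U) x / (2 * (n : ℝ≥0∞) + 2) ≤ locLeb (⋃ i, V i) x) := by
  set f : S → X → ℝ≥0∞ := fun s y => infEDist y (U s)ᶜ
  refine ⟨fun i => dominantSet f '' {T | T.card = i + 1}, ?_, ?_, ?_⟩
  · rintro i _ ⟨T, hT : T.card = i + 1, rfl⟩
    obtain ⟨t, ht⟩ := (Finset.card_pos (s := T)).1 (by omega)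
    exact ⟨t, fun y hy => mem_of_infEDist_compl_pos (hy t ht).1⟩
  · rintro i _ ⟨T₁, h₁, rfl⟩ _ ⟨T₂, h₂, rfl⟩ hne
    exact disjoint_dominantSet (h₁.trans h₂.symm) fun h => hne (h ▸ rfl)
  · intro x
    refine le_of_forall_lt_imp_le_of_dense fun r hr => ?_
    have hr' : ((n + 1 : ℕ) : ℝ≥0∞) * (2 * r) < ⨆ s, f s x := by
      have := (ENNReal.lt_div_iff_mul_lt (by simp) (Or.inl (by finiteness))).1 hr
      convert this using 1
      · push_cast
        ring
      · exact (iSup_range (g := fun V => infEDist x Vᶜ)).symm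
    obtain ⟨T, hT₀, hTn, hball⟩ := exists_eball_subset_dominantSet_infEDist (hmult x) hr'
    have hTV : dominantSet f T ∈ ⋃ i : Fin (n + 1), dominantSet f '' {T | T.card = i + 1} :=
      Set.mem_iUnion.2 ⟨⟨T.card - 1, by omega⟩, T, by simp [Nat.sub_add_cancel hT₀], rfl⟩
    exact (le_infEDist_compl_of_eball_subset hball).trans (le_iSup₂_of_le _ hTV le_rfl)
end

section
/- Every coarse family 𝒰 in a metric space X admits a coarse shrinking 𝒱 = {V_s} (V_s ⊆ U_s) such that for every M > 0 there is a bounded set A_M ⊆ X with the property that for x ∉ A_M, if B(x,M) meets V_s then B(x,M) ⊆ U_s. -/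
/-!
Fix a basepoint `x₀` and put `ℓ x = min (L_𝒰 x) (d(x, x₀))`: a finite, 1-Lipschitz minorant of
`L_𝒰` that still tends to infinity. Shrink `U_s` to `V_s = {y | ℓ y < 2 d(y, X \ U_s)}`.
If `ℓ x > 3r`, then `2 d(x, X \ U_s) > ℓ x + 3r` for some `s`, and the Lipschitz bounds put the
whole `r`-ball around `x` inside `V_s`; so `L_𝒱 ≥ ℓ / 3` and `𝒱` is coarse.
If `ℓ x > 5M` and `y ∈ B(x, M) ∩ V_s`, then `d(y, X \ U_s) > ℓ y / 2 ≥ 2M`, so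
`B(x, M) ⊆ B(y, 2M) ⊆ U_s`.
-/

open Filter Metric Bornology ENNReal Topology

noncomputable section

variable {X S : Type*}

section PseudoEMetric

variable [PseudoEMetricSpace X]

def coarseLevel (U : S → Set X) (x : X) : ℝ≥0∞ :=
  ⨆ s, infEDist x (U s)ᶜ

theorem coarseLevel_le_add_edist (U : S → Set X) (x y : X) :
    coarseLevel U x ≤ coarseLevel U y + edist x y :=
  iSup_le fun s => infEDist_le_infEDist_add_edist.trans <| by
    gcongr; exact le_iSup (fun t => infEDist y (U t)ᶜ) s

def coarseGauge (U : S → Set X) (x₀ x : X) : ℝ≥0∞ :=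
  min (coarseLevel U x) (edist x x₀)

theorem coarseGauge_le_coarseLevel (U : S → Set X) (x₀ x : X) :
    coarseGauge U x₀ x ≤ coarseLevel U x :=
  min_le_left _ _

theorem coarseGauge_le_add_edist (U : S → Set X) (x₀ x y : X) :
    coarseGauge U x₀ x ≤ coarseGauge U x₀ y + edist x y := by
  rw [coarseGauge, coarseGauge, ← min_add_add_right]
  exact min_le_min (coarseLevel_le_add_edist U x y)
    ((edist_triangle x y x₀).trans_eq (add_comm _ _))

def gaugeShrinking (ℓ : X → ℝ≥0∞) (U : S → Set X) (s : S) : Set X :=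
  {y | ℓ y < 2 * infEDist y (U s)ᶜ}

theorem gaugeShrinking_subset (ℓ : X → ℝ≥0∞) (U : S → Set X) (s : S) :
    gaugeShrinking ℓ U s ⊆ U s := by
  intro y hy
  by_contra hyU
  simp [gaugeShrinking, infEDist_zero_of_mem (Set.mem_compl hyU)] at hy

variable {ℓ : X → ℝ≥0∞} {U : S → Set X}

theorem edist_lt_imp_mem_gaugeShrinking (hℓ : ∀ x y, ℓ x ≤ ℓ y + edist x y) {x : X} {s : S}
    {r : ℝ≥0∞} (hr : r ≠ ⊤) (hx : ℓ x + 3 * r < 2 * infEDist x (U s)ᶜ) {y : X}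
    (hxy : edist x y < r) : y ∈ gaugeShrinking ℓ U s := by
  change ℓ y < 2 * _
  rw [← ENNReal.add_lt_add_iff_right (by finiteness : 2 * r ≠ ⊤)]
  calc ℓ y + 2 * r ≤ ℓ x + edist y x + 2 * r := by gcongr; exact hℓ y x
    _ ≤ ℓ x + 3 * r := by
      rw [add_assoc, show (3 : ℝ≥0∞) * r = r + 2 * r by ring, edist_comm]
      gcongr
    _ < 2 * infEDist x (U s)ᶜ := hx
    _ ≤ 2 * (infEDist y (U s)ᶜ + edist x y) := by gcongr; exact infEDist_le_infEDist_add_edist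
    _ ≤ 2 * infEDist y (U s)ᶜ + 2 * r := by rw [mul_add]; gcongr

theorem le_coarseLevel_gaugeShrinking (hℓ : ∀ x y, ℓ x ≤ ℓ y + edist x y)
    (hℓU : ∀ x, ℓ x ≤ coarseLevel U x) {x : X} (hx : ℓ x ≠ ⊤) {r : ℝ≥0∞} (hr : 3 * r < ℓ x) :
    r ≤ coarseLevel (gaugeShrinking ℓ U) x := by
  have hdeep : ℓ x + 3 * r < ⨆ s, 2 * infEDist x (U s)ᶜ := by
    rw [← ENNReal.mul_iSup]
    calc ℓ x + 3 * r < ℓ x + ℓ x := ENNReal.add_lt_add_left hx hr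
      _ = 2 * ℓ x := (two_mul _).symm
      _ ≤ 2 * coarseLevel U x := by gcongr; exact hℓU x
  obtain ⟨s, hs⟩ := lt_iSup_iff.mp hdeep
  have hr_top : r ≠ ⊤ := by
    rintro rfl
    simp at hr
  refine le_trans ?_ (le_iSup (fun t => infEDist x (gaugeShrinking ℓ U t)ᶜ) s)
  refine le_infEDist.mpr fun y hy => not_lt.mp fun hxy => hy ?_
  exact edist_lt_imp_mem_gaugeShrinking hℓ hr_top hs hxy

end PseudoEMetric

section PseudoMetric

variable [PseudoMetricSpace X]

theorem coarseGauge_ne_top (U : S → Set X) (x₀ x : X) : coarseGauge U x₀ x ≠ ⊤ :=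
  ne_top_of_le_ne_top (edist_ne_top x x₀) (min_le_right _ _)

theorem tendsto_coarseGauge {U : S → Set X} (hU : Tendsto (coarseLevel U) (cobounded X) (𝓝 ⊤))
    (x₀ : X) : Tendsto (coarseGauge U x₀) (cobounded X) (𝓝 ⊤) := by
  have hdist : Tendsto (edist · x₀) (cobounded X) (𝓝 ⊤) := by
    simp only [edist_dist]
    exact ENNReal.tendsto_ofReal_atTop.comp (tendsto_dist_right_cobounded_atTop x₀)
  exact hU.min hdist

theorem isBounded_setOf_le_of_tendsto_top {ℓ : X → ℝ≥0∞} (hℓ : Tendsto ℓ (cobounded X) (𝓝 ⊤))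
    {c : ℝ≥0∞} (hc : c ≠ ⊤) : IsBounded {x | ℓ x ≤ c} := by
  rw [isBounded_def]
  filter_upwards [hℓ (Ioi_mem_nhds hc.lt_top)] with x (hx : c < ℓ x)
  exact fun h : ℓ x ≤ c => h.not_gt hx

variable {ℓ : X → ℝ≥0∞} {U : S → Set X}

theorem tendsto_coarseLevel_gaugeShrinking (hℓ : ∀ x y, ℓ x ≤ ℓ y + edist x y)
    (hℓU : ∀ x, ℓ x ≤ coarseLevel U x) (hℓ_top : ∀ x, ℓ x ≠ ⊤)
    (hℓ_tendsto : Tendsto ℓ (cobounded X) (𝓝 ⊤)) :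
    Tendsto (coarseLevel (gaugeShrinking ℓ U)) (cobounded X) (𝓝 ⊤) := by
  refine ENNReal.tendsto_nhds_top_iff_nnreal.mpr fun K => ?_
  have h3K : 3 * ((K : ℝ≥0∞) + 1) ≠ ⊤ := by finiteness
  filter_upwards [hℓ_tendsto (Ioi_mem_nhds h3K.lt_top)] with x hx
  calc (K : ℝ≥0∞) < K + 1 := ENNReal.lt_add_right coe_ne_top one_ne_zero
    _ ≤ coarseLevel (gaugeShrinking ℓ U) x := le_coarseLevel_gaugeShrinking hℓ hℓU (hℓ_top x) hx

theorem ball_subset_of_nonempty_ball_inter_gaugeShrinking (hℓ : ∀ x y, ℓ x ≤ ℓ y + edist x y)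
    {x : X} {M : ℝ} (hx : 5 * ENNReal.ofReal M < ℓ x) {s : S}
    (hV : (ball x M ∩ gaugeShrinking ℓ U s).Nonempty) : ball x M ⊆ U s := by
  obtain ⟨y, hyx, hyV⟩ := hV
  intro z hzx
  set m := ENNReal.ofReal M
  have hxy : edist x y < m := by rw [edist_comm]; exact edist_lt_ofReal.mpr hyx
  have hxz : edist x z < m := by rw [edist_comm]; exact edist_lt_ofReal.mpr hzx
  have hℓy : 4 * m ≤ ℓ y := by
    rw [← ENNReal.add_le_add_iff_right ofReal_ne_top]
    calc 4 * m + m = 5 * m := by ring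
      _ ≤ ℓ x := hx.le
      _ ≤ ℓ y + edist x y := hℓ x y
      _ ≤ ℓ y + m := by gcongr
  have hyz : edist y z < infEDist y (U s)ᶜ := by
    rw [← ENNReal.mul_lt_mul_iff_right two_ne_zero ofNat_ne_top]
    calc 2 * edist y z ≤ 2 * (edist x y + edist x z) := by
          gcongr; exact edist_comm y x ▸ edist_triangle y x z
      _ < 2 * (m + m) :=
          ENNReal.mul_lt_mul_right two_ne_zero ofNat_ne_top (ENNReal.add_lt_add hxy hxz)
      _ = 4 * m := by ring
      _ ≤ ℓ y := hℓy
      _ < 2 * infEDist y (U s)ᶜ := hyV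
  by_contra hzU
  exact (infEDist_le_edist_of_mem (Set.mem_compl hzU)).not_gt hyz

end PseudoMetric

end

theorem stmt_12 {X : Type*} [MetricSpace X] {S : Type*} (U : S → Set X)
    (hU : Filter.Tendsto (fun x : X => ⨆ s : S, EMetric.infEdist x (U s)ᶜ)
      (Bornology.cobounded X) (nhds ⊤)) :
    ∃ V : S → Set X, (∀ s, V s ⊆ U s) ∧
      Filter.Tendsto (fun x : X => ⨆ s : S, EMetric.infEdist x (V s)ᶜ)
        (Bornology.cobounded X) (nhds ⊤) ∧
      (∀ M > (0 : ℝ), ∃ A : Set X, Bornology.IsBounded A ∧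
        ∀ x ∉ A, ∀ s : S, (Metric.ball x M ∩ V s).Nonempty → Metric.ball x M ⊆ U s) := by
  rcases isEmpty_or_nonempty X with _ | ⟨⟨x₀⟩⟩
  · exact ⟨U, fun _ => subset_rfl, hU, fun _ _ => ⟨∅, isBounded_empty, fun x => isEmptyElim x⟩⟩
  set ℓ := coarseGauge U x₀
  have hℓ : ∀ x y, ℓ x ≤ ℓ y + edist x y := coarseGauge_le_add_edist U x₀
  have hℓ_tendsto : Tendsto ℓ (cobounded X) (𝓝 ⊤) := tendsto_coarseGauge hU x₀
  refine ⟨gaugeShrinking ℓ U, gaugeShrinking_subset ℓ U, ?_, fun M _ => ?_⟩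
  · exact tendsto_coarseLevel_gaugeShrinking hℓ (coarseGauge_le_coarseLevel U x₀)
      (coarseGauge_ne_top U x₀) hℓ_tendsto
  · refine ⟨{x | ℓ x ≤ 5 * ENNReal.ofReal M},
      isBounded_setOf_le_of_tendsto_top hℓ_tendsto (by finiteness), fun x hx s => ?_⟩
    exact ball_subset_of_nonempty_ball_inter_gaugeShrinking hℓ (not_le.mp hx)
end

section
/- Let f, g : X → ℝ₊ be functions on a metric space with Osc(f,M)(x) < ε and Osc(g,M)(x) < ε for all x, and suppose f(x) + g(x) > N > 0 for all x. Then Osc(f/(f+g), M)(x) < 3ε/N for all x. -/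
open Filter Metric Bornology ENNReal

/-- Writing the difference over the common denominator `(a + b) (c + d)`, its numerator is
`d (a - c) - c (b - d)`, of size at most `δ (c + d)`. -/
theorem abs_div_add_sub_div_add_le {a b c d δ : ℝ} (hc : 0 ≤ c) (hd : 0 ≤ d)
    (hab : 0 < a + b) (hcd : 0 < c + d) (hac : |a - c| ≤ δ) (hbd : |b - d| ≤ δ) :
    |a / (a + b) - c / (c + d)| ≤ δ / (a + b) := by
  have hdiff : a / (a + b) - c / (c + d) = (d * (a - c) - c * (b - d)) / ((a + b) * (c + d)) := by
    field_simp
    ring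
  have hnum : |d * (a - c) - c * (b - d)| ≤ δ * (c + d) :=
    calc |d * (a - c) - c * (b - d)|
        ≤ d * |a - c| + c * |b - d| := by
          simpa only [abs_mul, abs_of_nonneg hc, abs_of_nonneg hd] using abs_sub (d * (a - c)) (c * (b - d))
      _ ≤ d * δ + c * δ := by gcongr
      _ = δ * (c + d) := by ring
  calc |a / (a + b) - c / (c + d)|
      = |d * (a - c) - c * (b - d)| / ((a + b) * (c + d)) := by
        rw [hdiff, abs_div, abs_of_pos (mul_pos hab hcd)]
    _ ≤ δ * (c + d) / ((a + b) * (c + d)) := by gcongr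
    _ = δ / (a + b) := by field_simp

theorem stmt_17_general {X : Type*} [MetricSpace X] (f g : X → ℝ) (M ε N : ℝ)
    (hN : 0 < N)
    (hf0 : ∀ x, 0 ≤ f x) (hg0 : ∀ x, 0 ≤ g x)
    (hfo : ∀ a x : X, dist x a < M → |f x - f a| < ε)
    (hgo : ∀ a x : X, dist x a < M → |g x - g a| < ε)
    (hsum : ∀ x, N < f x + g x) :
    ∀ a x : X, dist x a < M →
      |f x / (f x + g x) - f a / (f a + g a)| < 3 * ε / N := by
  intro a x hxa
  have hfx := hfo a x hxa
  have hε : 0 < ε := (abs_nonneg _).trans_lt hfx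
  calc |f x / (f x + g x) - f a / (f a + g a)|
      ≤ ε / (f x + g x) :=
        abs_div_add_sub_div_add_le (hf0 a) (hg0 a) (hN.trans (hsum x)) (hN.trans (hsum a))
          hfx.le (hgo a x hxa).le
    _ < ε / N := div_lt_div_of_pos_left hε hN (hsum x)
    _ ≤ 3 * ε / N := by gcongr; linarith

theorem stmt_17 {X : Type*} [MetricSpace X] (f g : X → ℝ) (M ε N : ℝ)
    (hε : 0 < ε) (hN : 0 < N)
    (hf0 : ∀ x, 0 ≤ f x) (hg0 : ∀ x, 0 ≤ g x)
    (hfo : ∀ a x : X, dist x a < M → |f x - f a| < ε)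
    (hgo : ∀ a x : X, dist x a < M → |g x - g a| < ε)
    (hsum : ∀ x, N < f x + g x) :
    ∀ a x : X, dist x a < M →
      |f x / (f x + g x) - f a / (f a + g a)| < 3 * ε / N :=
  stmt_17_general f g M ε N hN hf0 hg0 hfo hgo hsum
end

section
/- Let φ = {φ_s : X → ℝ₊}_{s∈S} be a family of functions with finite pointwise supremum sup(φ)(x) = sup_s φ_s(x). If for each s ∈ S and each a ∈ X, Osc(φ_s, M)(a) < (1/2)·sup(φ)(a), then for every a ∈ X the ball B(a,M) is contained in φ_s⁻¹(0,∞) for some s; that is, the Lebesgue number of the carrier family {φ_s⁻¹(0,∞)} is at least M. -/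
open Filter Metric Bornology ENNReal

/-! Choose `s` with `φ s a > sup(φ)(a) / 2`; since `φ s` oscillates by less than `sup(φ)(a) / 2`
on `B(a, M)`, it stays positive there. -/

lemma ball_subset_setOf_pos_of_abs_sub_lt {X : Type*} [PseudoMetricSpace X] {g : X → ℝ}
    {a : X} {M c : ℝ} (hc : c < g a) (hosc : ∀ x, dist x a < M → |g x - g a| < c) :
    ball a M ⊆ {x | 0 < g x} := fun x hx => by
  have := (abs_lt.mp (hosc x (mem_ball.mp hx))).1
  simp only [Set.mem_ofPred_eq]
  linarith

theorem stmt_18_general {X S : Type*} [MetricSpace X] [Nonempty S] (φ : S → X → ℝ) (M : ℝ)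
    (hM : 0 < M)
    (hosc : ∀ (s : S) (a x : X), dist x a < M →
      |φ s x - φ s a| < (1 / 2) * ⨆ s' : S, φ s' a) :
    ∀ a : X, ∃ s : S, Metric.ball a M ⊆ {x : X | 0 < φ s x} := by
  intro a
  have hsup_pos : 0 < ⨆ s', φ s' a := by
    have := hosc (Classical.arbitrary S) a a (by simpa using hM)
    rw [sub_self, abs_zero] at this
    linarith
  obtain ⟨s, hs⟩ : ∃ s, (1 / 2) * ⨆ s', φ s' a < φ s a :=
    exists_lt_of_lt_ciSup (by linarith)
  exact ⟨s, ball_subset_setOf_pos_of_abs_sub_lt hs (hosc s a)⟩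

theorem stmt_18 {X S : Type*} [MetricSpace X] [Nonempty S] (φ : S → X → ℝ) (M : ℝ)
    (hM : 0 < M)
    (h0 : ∀ s x, 0 ≤ φ s x)
    (hbdd : ∀ x : X, BddAbove (Set.range fun s => φ s x))
    (hosc : ∀ (s : S) (a x : X), dist x a < M →
      |φ s x - φ s a| < (1 / 2) * ⨆ s' : S, φ s' a) :
    ∀ a : X, ∃ s : S, Metric.ball a M ⊆ {x : X | 0 < φ s x} :=
  stmt_18_general φ M hM hosc
end
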